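/- arXiv:2007.09636 — 2 statements merged into one kernel-verified Lean document; each statement's English description precedes it below -/
import Mathlib

section
/- (Coefficient sector claim in the proof of Theorem 3.1, second case) Suppose Assumptions 2.1 and 3.1 hold, let τ ∈ (0, π/2) be such that arg( d(r)/d̃(r) ) ∈ [0, τ] for all r > r₁* (Lemma 3.1), and let ω ∈ ℂ \ {0} satisfy arg(−ω²d₀²) ∈ [0, π). Set τ₁ := max{ 2τ, arg d̂(r₁*), arg(−ω²d₀²) }. Then τ₁ ∈ (0, π) and for every r ≥ 0: arg( d̂(r)·|d̃(r)²| / ( d(r)·|d̂(r)| ) ) ∈ [0, τ₁] and arg( d(r)·d̂(r)·|d̃(r)²| / ( d̃(r)²·|d̂(r)| ) ) ∈ [0, τ₁]. -/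
/-!
On `[0, r₁*]` the profile vanishes, so `d = d̃ = 1` and `d̂ ≡ d̂(r₁*) = 1 + iA`; since `α̃` is
non-decreasing, `α ≥ 0` and hence `A ≥ 0`, so both quotients have argument
`arg d̂(r₁*) ∈ [0, π/2)`. Beyond `r₁*` we have `d̂ = d`: the first quotient is then a positive
real number, and the second is a positive multiple of `(d/d̃)²`, whose argument is
`2 arg(d/d̃) ∈ [0, 2τ] ⊆ [0, π)`. The moduli only contribute positive real factors.
-/

open Filter Set MeasureTheory

noncomputable def dtil (αt : ℝ → ℝ) (r : ℝ) : ℂ := 1 + Complex.I * (αt r : ℂ)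

noncomputable def afun (r₁ : ℝ) (αt : ℝ → ℝ) (r : ℝ) : ℝ :=
  if r₁ < r then r * deriv αt r + αt r else 0

noncomputable def dfun (r₁ : ℝ) (αt : ℝ → ℝ) (r : ℝ) : ℂ :=
  1 + Complex.I * (afun r₁ αt r : ℂ)

/-- Assumption 2.1: the profile function `αt` vanishes on `[0, r₁]`, is continuous,
positive beyond `r₁`, non-decreasing, and twice continuously differentiable on `(r₁, ∞)`
with continuous extensions of itself and its first two derivatives to `[r₁, ∞)`. -/
structure Assumption21 (r₁ : ℝ) (αt : ℝ → ℝ) : Prop where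
  r₁_pos : 0 < r₁
  nonneg : ∀ r, 0 ≤ r → 0 ≤ αt r
  eq_zero : ∀ r, 0 ≤ r → r ≤ r₁ → αt r = 0
  cont : ContinuousOn αt (Set.Ici 0)
  pos : ∀ r, r₁ < r → 0 < αt r
  mono : MonotoneOn αt (Set.Ici 0)
  smooth : ContDiffOn ℝ 2 αt (Set.Ioi r₁)
  ext0 : ∃ L : ℝ, Tendsto αt (nhdsWithin r₁ (Set.Ioi r₁)) (nhds L)
  ext1 : ∃ L : ℝ, Tendsto (deriv αt) (nhdsWithin r₁ (Set.Ioi r₁)) (nhds L)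
  ext2 : ∃ L : ℝ, Tendsto (deriv (deriv αt)) (nhdsWithin r₁ (Set.Ioi r₁)) (nhds L)

/-- Assumption 3.1: (a) `d̃·|d|/(|d̃|·d) → 1` as `r → ∞`, and
(b) the derivatives of `d̃/|d̃|` and `d/|d|` tend to `0` as `r → ∞`. -/
structure Assumption31 (r₁ : ℝ) (αt : ℝ → ℝ) : Prop where
  parta : Tendsto (fun r => dtil αt r * (‖dfun r₁ αt r‖ : ℂ) /
      ((‖dtil αt r‖ : ℂ) * dfun r₁ αt r)) atTop (nhds 1)
  partb1 : Tendsto (deriv (fun r => dtil αt r / (‖dtil αt r‖ : ℂ))) atTop (nhds 0)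
  partb2 : Tendsto (deriv (fun r => dfun r₁ αt r / (‖dfun r₁ αt r‖ : ℂ))) atTop (nhds 0)

open Complex

lemma one_add_I_mul_ofReal_ne_zero (a : ℝ) : 1 + I * (a : ℂ) ≠ 0 := by
  intro h
  simpa using congrArg re h

lemma arg_one_add_I_mul_ofReal_mem_Ico {a : ℝ} (ha : 0 ≤ a) :
    arg (1 + I * (a : ℂ)) ∈ Ico 0 (Real.pi / 2) :=
  ⟨arg_nonneg_iff.2 (by simp [ha]), arg_lt_pi_div_two_iff.2 (Or.inl (by simp))⟩

lemma arg_mul_ofReal_div_mul_ofReal (z w : ℂ) {s t : ℝ} (hs : 0 < s) (ht : 0 < t) :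
    arg (z * s / (w * t)) = arg (z / w) := by
  have ht' : (t : ℂ) ≠ 0 := ofReal_ne_zero.2 ht.ne'
  have h : z * s / (w * t) = ((s / t : ℝ) : ℂ) * (z / w) := by
    push_cast
    field_simp
  rw [h, arg_real_mul _ (div_pos hs ht)]

lemma arg_sq_eq_two_mul_arg {z : ℂ} (hz : arg z ∈ Ioc (-(Real.pi / 2)) (Real.pi / 2)) :
    arg (z ^ 2) = 2 * arg z := by
  rcases eq_or_ne z 0 with rfl | hz₀
  · simp
  rw [sq, arg_mul hz₀ hz₀ ⟨by linarith [hz.1], by linarith [hz.2]⟩, two_mul]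

lemma dfun_of_le {r₁ r : ℝ} (αt : ℝ → ℝ) (hr : r ≤ r₁) : dfun r₁ αt r = 1 := by
  simp [dfun, afun, not_lt.2 hr]

namespace Assumption21

variable {r₁ : ℝ} {αt : ℝ → ℝ}

lemma dtil_of_le (h : Assumption21 r₁ αt) {r : ℝ} (hr₀ : 0 ≤ r) (hr : r ≤ r₁) :
    dtil αt r = 1 := by
  simp [dtil, h.eq_zero r hr₀ hr]

lemma deriv_nonneg (h : Assumption21 r₁ αt) {r : ℝ} (hr : 0 < r) : 0 ≤ deriv αt r := by
  rw [← derivWithin_of_isOpen isOpen_Ioi hr]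
  exact (h.mono.mono Ioi_subset_Ici_self).derivWithin_nonneg

lemma afun_nonneg (h : Assumption21 r₁ αt) (r : ℝ) : 0 ≤ afun r₁ αt r := by
  unfold afun
  split_ifs with hr
  · have hr₀ : 0 < r := h.r₁_pos.trans hr
    exact add_nonneg (mul_nonneg hr₀.le (h.deriv_nonneg hr₀)) (h.pos r hr).le
  · exact le_rfl

end Assumption21

theorem stmt10_general (r₁ : ℝ) (αt : ℝ → ℝ)
    (h21 : Assumption21 r₁ αt)
    (d₀ : ℂ)
    (τ : ℝ) (hτ : τ ∈ Set.Ioo 0 (Real.pi / 2))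
    (hτarg : ∀ r, r₁ < r → (dfun r₁ αt r / dtil αt r).arg ∈ Set.Icc 0 τ)
    (A : ℝ) (hA : Tendsto (afun r₁ αt) (nhdsWithin r₁ (Set.Ioi r₁)) (nhds A))
    (αh : ℝ → ℝ)
    (hαh₁ : ∀ r, 0 ≤ r → r ≤ r₁ → αh r = A)
    (hαh₂ : ∀ r, r₁ < r → αh r = afun r₁ αt r)
    (ω : ℂ)
    (hargω : (-(ω ^ 2 * d₀ ^ 2)).arg ∈ Set.Ico 0 Real.pi) :
    max (max (2 * τ) (dtil αh r₁).arg) (-(ω ^ 2 * d₀ ^ 2)).arg ∈ Set.Ioo 0 Real.pi ∧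
    ∀ r, 0 ≤ r →
      (dtil αh r * (‖(dtil αt r) ^ 2‖ : ℂ) /
          (dfun r₁ αt r * (‖dtil αh r‖ : ℂ))).arg ∈
        Set.Icc 0 (max (max (2 * τ) (dtil αh r₁).arg) (-(ω ^ 2 * d₀ ^ 2)).arg) ∧
      (dfun r₁ αt r * dtil αh r * (‖(dtil αt r) ^ 2‖ : ℂ) /
          ((dtil αt r) ^ 2 * (‖dtil αh r‖ : ℂ))).arg ∈
        Set.Icc 0 (max (max (2 * τ) (dtil αh r₁).arg) (-(ω ^ 2 * d₀ ^ 2)).arg) := by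
  set τ₁ := max (max (2 * τ) (dtil αh r₁).arg) (-(ω ^ 2 * d₀ ^ 2)).arg
  have hr₁ := h21.r₁_pos
  have hargA : (dtil αh r₁).arg ∈ Ico 0 (Real.pi / 2) := by
    rw [dtil, hαh₁ r₁ hr₁.le le_rfl]
    exact arg_one_add_I_mul_ofReal_mem_Ico (ge_of_tendsto hA (.of_forall h21.afun_nonneg))
  have h2τ : 2 * τ ≤ τ₁ := (le_max_left _ _).trans (le_max_left _ _)
  have hAτ₁ : (dtil αh r₁).arg ≤ τ₁ := (le_max_right _ _).trans (le_max_left _ _)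
  refine ⟨⟨by linarith [hτ.1], max_lt (max_lt (by linarith [hτ.2])
    (by linarith [hargA.2, Real.pi_pos])) hargω.2⟩, fun r hr => ?_⟩
  have hdhat : dtil αh r ≠ 0 := one_add_I_mul_ofReal_ne_zero _
  have hsq : 0 < ‖dtil αt r ^ 2‖ :=
    norm_pos_iff.2 (pow_ne_zero 2 (one_add_I_mul_ofReal_ne_zero _))
  rw [arg_mul_ofReal_div_mul_ofReal _ _ hsq (norm_pos_iff.2 hdhat),
    arg_mul_ofReal_div_mul_ofReal _ _ hsq (norm_pos_iff.2 hdhat)]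
  rcases le_or_gt r r₁ with hle | hlt
  · have hαh : dtil αh r = dtil αh r₁ := by
      rw [dtil, dtil, hαh₁ r hr hle, hαh₁ r₁ hr₁.le le_rfl]
    rw [hαh, dfun_of_le αt hle, h21.dtil_of_le hr hle]
    simp only [div_one, one_mul, one_pow]
    exact ⟨⟨hargA.1, hAτ₁⟩, hargA.1, hAτ₁⟩
  · have hαh : dtil αh r = dfun r₁ αt r := by rw [dtil, dfun, hαh₂ r hlt]
    obtain ⟨hz₀, hzτ⟩ := hτarg r hlt
    rw [hαh, div_self (hαh ▸ hdhat), arg_one, ← sq, ← div_pow,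
      arg_sq_eq_two_mul_arg ⟨by linarith [Real.pi_pos], by linarith [hτ.2]⟩]
    exact ⟨⟨le_rfl, by linarith [hτ.1]⟩, by linarith, by linarith⟩

/-- Coefficient sector claim in the proof of Theorem 3.1, second case.
Here `αh` plays the role of `α̂` (equal to the right limit `A` of `α` at `r₁*` on `[0, r₁*]`
and to `α` beyond `r₁*`), and `d̂ = dtil αh`. With
`τ₁ = max{2τ, arg d̂(r₁*), arg(−ω²d₀²)}` one has `τ₁ ∈ (0, π)` and, for every `r ≥ 0`,
`arg(d̂(r)·|d̃(r)²|/(d(r)·|d̂(r)|)) ∈ [0, τ₁]` and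
`arg(d(r)·d̂(r)·|d̃(r)²|/(d̃(r)²·|d̂(r)|)) ∈ [0, τ₁]`. -/
theorem stmt10 (r₁ : ℝ) (αt : ℝ → ℝ)
    (h21 : Assumption21 r₁ αt) (h31 : Assumption31 r₁ αt)
    (d₀ : ℂ)
    (hd₀ : Tendsto (fun r => dtil αt r / (‖dtil αt r‖ : ℂ)) atTop (nhds d₀))
    (τ : ℝ) (hτ : τ ∈ Set.Ioo 0 (Real.pi / 2))
    (hτarg : ∀ r, r₁ < r → (dfun r₁ αt r / dtil αt r).arg ∈ Set.Icc 0 τ)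
    (A : ℝ) (hA : Tendsto (afun r₁ αt) (nhdsWithin r₁ (Set.Ioi r₁)) (nhds A))
    (αh : ℝ → ℝ)
    (hαh₁ : ∀ r, 0 ≤ r → r ≤ r₁ → αh r = A)
    (hαh₂ : ∀ r, r₁ < r → αh r = afun r₁ αt r)
    (ω : ℂ) (hω : ω ≠ 0)
    (hargω : (-(ω ^ 2 * d₀ ^ 2)).arg ∈ Set.Ico 0 Real.pi) :
    max (max (2 * τ) (dtil αh r₁).arg) (-(ω ^ 2 * d₀ ^ 2)).arg ∈ Set.Ioo 0 Real.pi ∧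
    ∀ r, 0 ≤ r →
      (dtil αh r * (‖(dtil αt r) ^ 2‖ : ℂ) /
          (dfun r₁ αt r * (‖dtil αh r‖ : ℂ))).arg ∈
        Set.Icc 0 (max (max (2 * τ) (dtil αh r₁).arg) (-(ω ^ 2 * d₀ ^ 2)).arg) ∧
      (dfun r₁ αt r * dtil αh r * (‖(dtil αt r) ^ 2‖ : ℂ) /
          ((dtil αt r) ^ 2 * (‖dtil αh r‖ : ℂ))).arg ∈
        Set.Icc 0 (max (max (2 * τ) (dtil αh r₁).arg) (-(ω ^ 2 * d₀ ^ 2)).arg) :=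
  stmt10_general r₁ αt h21 d₀ τ hτ hτarg A hA αh hαh₁ hαh₂ ω hargω
end

section
/- (Coercivity estimate of the part a₁ in the proof of Theorem 3.1, first case, for smooth test functions) Suppose Assumption 2.1 holds, let Ω ⊆ ℝ³ be open, let ω ∈ ℂ \ {0} and d₀ ∈ ℂ with |d₀| = 1, and let τ₁ ∈ (−π, 0) be such that arg(−ω²d₀²) ∈ [τ₁, 0] and, for every r ≥ 0, arg( d̃(r)²·|d̂(r)| / ( d(r)·d̂(r) ) ) ∈ [τ₁, 0] and arg( d(r)·|d̂(r)| / d̂(r) ) ∈ [τ₁, 0]. For a continuously differentiable compactly supported u : Ω → ℂ set a₁(u,u) := ∫_Ω [ ( d̃(x)²·|d̂(x)| / ( d(x)·d̂(x) ) )·|x·∇u(x)|²/|x|² + ( d(x)·|d̂(x)| / d̂(x) )·( |∇u(x)|² − |x·∇u(x)|²/|x|² ) ] dx − ω²d₀²·∫_Ω |d̃(x)²·d(x)|·|u(x)|² dx, where radial weights are evaluated as f(x) := f(|x|). Then for every such u: Re( i·e^{−i(π+τ₁)/2}·a₁(u,u) ) ≥ cos(τ₁/2)·min{1, |ω|²}·‖u‖_X².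 -/
open Filter Set MeasureTheory

/-- Squared Euclidean norm of the gradient of `u` at `x`, `|∇u(x)|² = ∑ⱼ |∂ⱼu(x)|²`. -/
noncomputable def gradSq (u : EuclideanSpace ℝ (Fin 3) → ℂ) (x : EuclideanSpace ℝ (Fin 3)) : ℝ :=
  ∑ j : Fin 3, ‖fderiv ℝ u x (EuclideanSpace.single j 1)‖ ^ 2

/-- Squared modulus of the radial derivative, `|x·∇u(x)|²/|x|²`. -/
noncomputable def radSq (u : EuclideanSpace ℝ (Fin 3) → ℂ) (x : EuclideanSpace ℝ (Fin 3)) : ℝ :=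
  ‖fderiv ℝ u x x‖ ^ 2 / ‖x‖ ^ 2

/-- The squared weighted norm `‖u‖_X²` with radial weights evaluated at `|x|`. -/
noncomputable def XnormSq (r₁ : ℝ) (αt : ℝ → ℝ) (Ω : Set (EuclideanSpace ℝ (Fin 3)))
    (u : EuclideanSpace ℝ (Fin 3) → ℂ) : ℝ :=
  (∫ x in Ω, (‖(dtil αt ‖x‖) ^ 2 / dfun r₁ αt ‖x‖‖ * radSq u x
      + ‖dfun r₁ αt ‖x‖‖ * (gradSq u x - radSq u x))) +
  ∫ x in Ω, ‖(dtil αt ‖x‖) ^ 2 * dfun r₁ αt ‖x‖‖ * ‖u x‖ ^ 2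

/-- The sesquilinear part `a₁(u,u)` from the proof of Theorem 3.1 (first case), with
`d̂ = dtil αh`. -/
noncomputable def aOne (r₁ : ℝ) (αt αh : ℝ → ℝ) (Ω : Set (EuclideanSpace ℝ (Fin 3)))
    (ω d₀ : ℂ) (u : EuclideanSpace ℝ (Fin 3) → ℂ) : ℂ :=
  (∫ x in Ω,
      (((dtil αt ‖x‖) ^ 2 * (‖dtil αh ‖x‖‖ : ℂ) /
          (dfun r₁ αt ‖x‖ * dtil αh ‖x‖)) * ((radSq u x : ℝ) : ℂ)
        + (dfun r₁ αt ‖x‖ * (‖dtil αh ‖x‖‖ : ℂ) / dtil αh ‖x‖) *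
          ((gradSq u x - radSq u x : ℝ) : ℂ)))
  - ω ^ 2 * d₀ ^ 2 *
      ∫ x in Ω, ((‖(dtil αt ‖x‖) ^ 2 * dfun r₁ αt ‖x‖‖ : ℝ) : ℂ) *
        ((‖u x‖ ^ 2 : ℝ) : ℂ)


/-!
Rotating by `i·e^{-i(π+τ₁)/2} = e^{-iτ₁/2}` maps the sector `arg ∈ [τ₁, 0]`, which contains
`−ω²d₀²` and both coefficients of `a₁`, onto `|arg| ≤ −τ₁/2 < π/2`, where `Re z ≥ cos(τ₁/2)·|z|`.
The moduli of the coefficients of `a₁` are exactly the weights of `‖u‖_X²` (the factor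
`|d̂|/d̂` has modulus one), so the pointwise bound integrates to the estimate, and
`min{1, |ω|²}` bounds both the gradient part and the mass part `|ω²d₀²| = |ω|²`.
-/

open Complex

section Sector

theorem Complex.re_exp_neg_mul_I_mul (z : ℂ) (θ : ℝ) :
    (exp (-(θ : ℂ) * I) * z).re = ‖z‖ * Real.cos (z.arg - θ) := by
  rw [Real.cos_sub, mul_add, ← mul_assoc, ← mul_assoc, norm_mul_cos_arg, norm_mul_sin_arg,
    ← ofReal_neg, mul_re, exp_ofReal_mul_I_re, exp_ofReal_mul_I_im, Real.cos_neg, Real.sin_neg]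
  ring

theorem Complex.cos_mul_norm_le_re_exp_neg_mul_I_mul {z : ℂ} {θ δ : ℝ} (hδ : δ ≤ Real.pi)
    (h : |z.arg - θ| ≤ δ) : Real.cos δ * ‖z‖ ≤ (exp (-(θ : ℂ) * I) * z).re := by
  rw [re_exp_neg_mul_I_mul, mul_comm, ← Real.cos_abs (z.arg - θ)]
  exact mul_le_mul_of_nonneg_left
    (Real.cos_le_cos_of_nonneg_of_le_pi (abs_nonneg _) hδ h) (norm_nonneg z)

variable {τ : ℝ}

theorem cos_half_mul_norm_le_re_of_arg_mem_Icc (hτ : τ ∈ Ioo (-Real.pi) 0) {z : ℂ}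
    (hz : z.arg ∈ Icc τ 0) :
    Real.cos (τ / 2) * ‖z‖ ≤ (exp (-((τ / 2 : ℝ) : ℂ) * I) * z).re := by
  rw [← Real.cos_neg]
  refine cos_mul_norm_le_re_exp_neg_mul_I_mul (by linarith [hτ.1, Real.pi_pos]) ?_
  rw [abs_le]
  constructor <;> linarith [hz.1, hz.2]

theorem cos_half_mul_le_re_of_arg_mem_Icc (hτ : τ ∈ Ioo (-Real.pi) 0) {z w : ℂ}
    (hz : z.arg ∈ Icc τ 0) (hw : w.arg ∈ Icc τ 0) {s t : ℝ} (hs : 0 ≤ s) (ht : 0 ≤ t) :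
    Real.cos (τ / 2) * (‖z‖ * s + ‖w‖ * t) ≤
      (exp (-((τ / 2 : ℝ) : ℂ) * I) * (z * s + w * t)).re := by
  have hz' := mul_le_mul_of_nonneg_right (cos_half_mul_norm_le_re_of_arg_mem_Icc hτ hz) hs
  have hw' := mul_le_mul_of_nonneg_right (cos_half_mul_norm_le_re_of_arg_mem_Icc hτ hw) ht
  simp only [mul_add, ← mul_assoc, add_re, re_mul_ofReal]
  linarith

theorem I_mul_exp_neg_I_mul (τ : ℝ) :
    I * exp (-I * (((Real.pi + τ) / 2 : ℝ) : ℂ)) = exp (-((τ / 2 : ℝ) : ℂ) * I) := by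
  nth_rw 1 [← exp_pi_div_two_mul_I]
  rw [← exp_add]
  congr 1
  push_cast
  ring

end Sector

theorem mul_integral_le_re_mul_integral {α : Type*} [MeasurableSpace α] {μ : Measure α}
    {F : α → ℂ} {g : α → ℝ} {κ : ℝ} (c : ℂ) (hF : AEStronglyMeasurable F μ) (hκ : 0 ≤ κ)
    (hFg : ∀ x, ‖F x‖ ≤ g x) (hre : ∀ x, κ * g x ≤ (c * F x).re) :
    κ * ∫ x, g x ∂μ ≤ (c * ∫ x, F x ∂μ).re := by
  by_cases hFi : Integrable F μ
  · have hFc := hFi.const_mul c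
    rw [← integral_const_mul, ← integral_const_mul, ← RCLike.re_eq_complex_re, ← integral_re hFc]
    exact integral_mono_of_nonneg
      (ae_of_all _ fun x => mul_nonneg hκ ((norm_nonneg _).trans (hFg x))) hFc.re (ae_of_all _ hre)
  · -- `‖F‖ ≤ g`, so both integrals take the junk value `0`
    have hgi : ¬Integrable g μ := fun hgi => hFi (hgi.mono' hF (ae_of_all _ hFg))
    simp [integral_undef hFi, integral_undef hgi]

theorem EuclideanSpace.norm_apply_sq_le {ι F : Type*} [Fintype ι] [DecidableEq ι]
    [SeminormedAddCommGroup F] [NormedSpace ℝ F] (L : EuclideanSpace ℝ ι →L[ℝ] F)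
    (x : EuclideanSpace ℝ ι) :
    ‖L x‖ ^ 2 ≤ (∑ j, ‖L (EuclideanSpace.single j 1)‖ ^ 2) * ‖x‖ ^ 2 := by
  have hx : ∑ j, x j • EuclideanSpace.single j (1 : ℝ) = x := by
    simpa [EuclideanSpace.basisFun_apply] using (EuclideanSpace.basisFun ι ℝ).sum_repr x
  have hLx : ‖L x‖ ≤ ∑ j, |x j| * ‖L (EuclideanSpace.single j 1)‖ := by
    conv_lhs => rw [← hx, map_sum]
    refine (norm_sum_le _ _).trans (le_of_eq (Finset.sum_congr rfl fun j _ => ?_))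
    rw [L.map_smul, norm_smul, Real.norm_eq_abs]
  have hnorm : ‖x‖ ^ 2 = ∑ j, |x j| ^ 2 := by
    simp [EuclideanSpace.norm_sq_eq]
  calc ‖L x‖ ^ 2 ≤ (∑ j, |x j| * ‖L (EuclideanSpace.single j 1)‖) ^ 2 :=
        pow_le_pow_left₀ (norm_nonneg _) hLx 2
    _ ≤ (∑ j, |x j| ^ 2) * ∑ j, ‖L (EuclideanSpace.single j 1)‖ ^ 2 :=
        Finset.sum_mul_sq_le_sq_mul_sq _ _ _
    _ = _ := by rw [hnorm, mul_comm]

section Gradient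

variable (u : EuclideanSpace ℝ (Fin 3) → ℂ)

theorem gradSq_nonneg (x : EuclideanSpace ℝ (Fin 3)) : 0 ≤ gradSq u x :=
  Finset.sum_nonneg fun _ _ => sq_nonneg _

theorem radSq_nonneg (x : EuclideanSpace ℝ (Fin 3)) : 0 ≤ radSq u x := by
  unfold radSq; positivity

theorem radSq_le_gradSq (x : EuclideanSpace ℝ (Fin 3)) : radSq u x ≤ gradSq u x :=
  div_le_of_le_mul₀ (sq_nonneg _) (gradSq_nonneg u x)
    (EuclideanSpace.norm_apply_sq_le (fderiv ℝ u x) x)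

theorem measurable_gradSq : Measurable (gradSq u) := by
  unfold gradSq; fun_prop

theorem measurable_radSq : Measurable (radSq u) := by
  have : Measurable fun x => fderiv ℝ u x x :=
    isBoundedBilinearMap_apply.continuous.measurable2 (measurable_fderiv ℝ u) measurable_id
  unfold radSq; fun_prop

end Gradient

section Coefficients

variable (r₁ : ℝ) (αt αh : ℝ → ℝ)

noncomputable def radCoef (r : ℝ) : ℂ :=
  dtil αt r ^ 2 * (‖dtil αh r‖ : ℂ) / (dfun r₁ αt r * dtil αh r)

noncomputable def angCoef (r : ℝ) : ℂ := dfun r₁ αt r * (‖dtil αh r‖ : ℂ) / dtil αh r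

theorem dtil_ne_zero (r : ℝ) : dtil αh r ≠ 0 := fun h => by
  simpa [dtil] using congrArg re h

theorem norm_radCoef (r : ℝ) : ‖radCoef r₁ αt αh r‖ = ‖dtil αt r ^ 2 / dfun r₁ αt r‖ := by
  have := norm_ne_zero_iff.2 (dtil_ne_zero αh r)
  rw [radCoef, norm_div, norm_div, norm_mul, norm_mul, norm_real, norm_norm,
    mul_div_mul_right _ _ this]

theorem norm_angCoef (r : ℝ) : ‖angCoef r₁ αt αh r‖ = ‖dfun r₁ αt r‖ := by
  have := norm_ne_zero_iff.2 (dtil_ne_zero αh r)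
  rw [angCoef, norm_div, norm_mul, norm_real, norm_norm, mul_div_assoc, div_self this, mul_one]

variable {E : Type*} [NormedAddCommGroup E] [MeasurableSpace E] [OpensMeasurableSpace E]
  {r₁ αt αh}

theorem measurable_one_add_I_mul {X : Type*} [MeasurableSpace X] {f : X → ℝ}
    (hf : Measurable f) : Measurable fun x => 1 + I * (f x : ℂ) := by
  fun_prop

theorem measurable_afun_norm (hαt : ContinuousOn αt (Ici 0)) :
    Measurable fun x : E => afun r₁ αt ‖x‖ := by
  have hαt' : Measurable fun x : E => αt ‖x‖ :=
    (hαt.comp_continuous continuous_norm fun x => norm_nonneg x).measurable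
  have hderiv : Measurable fun x : E => deriv αt ‖x‖ := (measurable_deriv αt).comp measurable_norm
  exact Measurable.ite (measurableSet_lt measurable_const measurable_norm)
    ((measurable_norm.mul hderiv).add hαt') measurable_const

theorem measurable_comp_norm_of_eq_afun (hαt : ContinuousOn αt (Ici 0)) {A : ℝ}
    (hαh₁ : ∀ r, 0 ≤ r → r ≤ r₁ → αh r = A) (hαh₂ : ∀ r, r₁ < r → αh r = afun r₁ αt r) :
    Measurable fun x : E => αh ‖x‖ := by
  have : (fun x : E => αh ‖x‖) = fun x => if ‖x‖ ≤ r₁ then A else afun r₁ αt ‖x‖ := by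
    funext x
    split_ifs with hx
    exacts [hαh₁ _ (norm_nonneg x) hx, hαh₂ _ (not_le.1 hx)]
  rw [this]
  exact Measurable.ite (measurableSet_le measurable_norm measurable_const) measurable_const
    (measurable_afun_norm hαt)

end Coefficients

section Densities

variable (r₁ : ℝ) (αt αh : ℝ → ℝ) (u : EuclideanSpace ℝ (Fin 3) → ℂ)

noncomputable def weightedGradSq (x : EuclideanSpace ℝ (Fin 3)) : ℝ :=
  ‖dtil αt ‖x‖ ^ 2 / dfun r₁ αt ‖x‖‖ * radSq u x + ‖dfun r₁ αt ‖x‖‖ * (gradSq u x - radSq u x)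

noncomputable def aOneGradIntegrand (x : EuclideanSpace ℝ (Fin 3)) : ℂ :=
  radCoef r₁ αt αh ‖x‖ * (radSq u x : ℂ) +
    angCoef r₁ αt αh ‖x‖ * ((gradSq u x - radSq u x : ℝ) : ℂ)

theorem norm_aOneGradIntegrand_le (x : EuclideanSpace ℝ (Fin 3)) :
    ‖aOneGradIntegrand r₁ αt αh u x‖ ≤ weightedGradSq r₁ αt u x := by
  have hrad := radSq_nonneg u x
  have hang := sub_nonneg.2 (radSq_le_gradSq u x)
  refine (norm_add_le _ _).trans_eq ?_
  rw [norm_mul, norm_mul, norm_radCoef, norm_angCoef, norm_real, norm_real,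
    Real.norm_of_nonneg hrad, Real.norm_of_nonneg hang, weightedGradSq]

theorem cos_half_mul_weightedGradSq_le {τ : ℝ} (hτ : τ ∈ Ioo (-Real.pi) 0)
    (hrad : ∀ r, 0 ≤ r → (radCoef r₁ αt αh r).arg ∈ Icc τ 0)
    (hang : ∀ r, 0 ≤ r → (angCoef r₁ αt αh r).arg ∈ Icc τ 0) (x : EuclideanSpace ℝ (Fin 3)) :
    Real.cos (τ / 2) * weightedGradSq r₁ αt u x ≤
      (exp (-((τ / 2 : ℝ) : ℂ) * I) * aOneGradIntegrand r₁ αt αh u x).re := by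
  have h := cos_half_mul_le_re_of_arg_mem_Icc hτ (hrad _ (norm_nonneg x)) (hang _ (norm_nonneg x))
    (radSq_nonneg u x) (sub_nonneg.2 (radSq_le_gradSq u x))
  rwa [norm_radCoef, norm_angCoef] at h

theorem measurable_aOneGradIntegrand (hαt : ContinuousOn αt (Ici 0))
    (hαh : Measurable fun x : EuclideanSpace ℝ (Fin 3) => αh ‖x‖) :
    Measurable (aOneGradIntegrand r₁ αt αh u) := by
  have hdt : Measurable fun x : EuclideanSpace ℝ (Fin 3) => dtil αt ‖x‖ :=
    measurable_one_add_I_mul (hαt.comp_continuous continuous_norm norm_nonneg).measurable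
  have hdh : Measurable fun x : EuclideanSpace ℝ (Fin 3) => dtil αh ‖x‖ :=
    measurable_one_add_I_mul hαh
  have hd : Measurable fun x : EuclideanSpace ℝ (Fin 3) => dfun r₁ αt ‖x‖ :=
    measurable_one_add_I_mul (measurable_afun_norm hαt)
  have := measurable_radSq u
  have := measurable_gradSq u
  unfold aOneGradIntegrand radCoef angCoef
  fun_prop

theorem aOne_eq (Ω : Set (EuclideanSpace ℝ (Fin 3))) (ω d₀ : ℂ) :
    aOne r₁ αt αh Ω ω d₀ u = (∫ x in Ω, aOneGradIntegrand r₁ αt αh u x) -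
      ω ^ 2 * d₀ ^ 2 * ((∫ x in Ω, ‖dtil αt ‖x‖ ^ 2 * dfun r₁ αt ‖x‖‖ * ‖u x‖ ^ 2 : ℝ) : ℂ) := by
  unfold aOne
  simp_rw [← Complex.ofReal_mul, integral_complex_ofReal]
  rfl

end Densities

theorem stmt11_general (r₁ : ℝ) (αt : ℝ → ℝ) (h21 : Assumption21 r₁ αt)
    (Ω : Set (EuclideanSpace ℝ (Fin 3)))
    (ω d₀ : ℂ) (hd₀ : ‖d₀‖ = 1)
    (A : ℝ)
    (αh : ℝ → ℝ)
    (hαh₁ : ∀ r, 0 ≤ r → r ≤ r₁ → αh r = A)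
    (hαh₂ : ∀ r, r₁ < r → αh r = afun r₁ αt r)
    (τ₁ : ℝ) (hτ₁ : τ₁ ∈ Set.Ioo (-Real.pi) 0)
    (hargω : (-(ω ^ 2 * d₀ ^ 2)).arg ∈ Set.Icc τ₁ 0)
    (hsec1 : ∀ r, 0 ≤ r →
      ((dtil αt r) ^ 2 * (‖dtil αh r‖ : ℂ) / (dfun r₁ αt r * dtil αh r)).arg ∈
        Set.Icc τ₁ 0)
    (hsec2 : ∀ r, 0 ≤ r →
      (dfun r₁ αt r * (‖dtil αh r‖ : ℂ) / dtil αh r).arg ∈ Set.Icc τ₁ 0) :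
    ∀ u : EuclideanSpace ℝ (Fin 3) → ℂ, ContDiff ℝ 1 u → HasCompactSupport u →
      tsupport u ⊆ Ω →
      Real.cos (τ₁ / 2) * min 1 (‖ω‖ ^ 2) * XnormSq r₁ αt Ω u ≤
        (Complex.I * Complex.exp (-Complex.I * (((Real.pi + τ₁) / 2 : ℝ) : ℂ)) *
          aOne r₁ αt αh Ω ω d₀ u).re := by
  intro u _ _ _
  rw [I_mul_exp_neg_I_mul, aOne_eq]
  set c := exp (-((τ₁ / 2 : ℝ) : ℂ) * I)
  set m := min 1 (‖ω‖ ^ 2)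
  set J := ∫ x in Ω, ‖dtil αt ‖x‖ ^ 2 * dfun r₁ αt ‖x‖‖ * ‖u x‖ ^ 2
  have hcos : 0 ≤ Real.cos (τ₁ / 2) :=
    Real.cos_nonneg_of_mem_Icc ⟨by linarith [hτ₁.1], by linarith [hτ₁.2, Real.pi_pos]⟩
  have hm₀ : 0 ≤ m := le_min zero_le_one (sq_nonneg _)
  have hm₁ : m ≤ 1 := min_le_left _ _
  have hgrad : Real.cos (τ₁ / 2) * m * ∫ x in Ω, weightedGradSq r₁ αt u x ≤
      (c * ∫ x in Ω, aOneGradIntegrand r₁ αt αh u x).re := by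
    refine mul_integral_le_re_mul_integral c
      (measurable_aOneGradIntegrand r₁ αt αh u h21.cont
        (measurable_comp_norm_of_eq_afun h21.cont hαh₁ hαh₂)).aestronglyMeasurable
      (mul_nonneg hcos hm₀) (norm_aOneGradIntegrand_le r₁ αt αh u) fun x => ?_
    have hweight := (norm_nonneg _).trans (norm_aOneGradIntegrand_le r₁ αt αh u x)
    calc Real.cos (τ₁ / 2) * m * weightedGradSq r₁ αt u x
        ≤ Real.cos (τ₁ / 2) * weightedGradSq r₁ αt u x := by
          gcongr; exact mul_le_of_le_one_right hcos hm₁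
      _ ≤ _ := cos_half_mul_weightedGradSq_le r₁ αt αh u hτ₁ hsec1 hsec2 x
  have hmass : Real.cos (τ₁ / 2) * m * J ≤ (c * -(ω ^ 2 * d₀ ^ 2)).re * J := by
    refine mul_le_mul_of_nonneg_right ?_ (integral_nonneg fun x => by positivity)
    have h := cos_half_mul_norm_le_re_of_arg_mem_Icc hτ₁ hargω
    rw [norm_neg, norm_mul, norm_pow, norm_pow, hd₀, one_pow, mul_one] at h
    exact (mul_le_mul_of_nonneg_left (min_le_right _ _) hcos).trans h
  change Real.cos (τ₁ / 2) * m * ((∫ x in Ω, weightedGradSq r₁ αt u x) + J) ≤ _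
  rw [mul_add, mul_sub, sub_eq_add_neg, add_re]
  refine add_le_add hgrad (hmass.trans_eq ?_)
  rw [← re_mul_ofReal]
  congr 1
  ring

/-- Coercivity estimate of the part `a₁` in the proof of Theorem 3.1, first case, for
smooth compactly supported test functions: if `τ₁ ∈ (−π, 0)`, `arg(−ω²d₀²) ∈ [τ₁, 0]`, and
all coefficient arguments lie in `[τ₁, 0]`, then
`Re(i·e^{−i(π+τ₁)/2}·a₁(u,u)) ≥ cos(τ₁/2)·min{1,|ω|²}·‖u‖_X²`. -/
theorem stmt11 (r₁ : ℝ) (αt : ℝ → ℝ) (h21 : Assumption21 r₁ αt)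
    (Ω : Set (EuclideanSpace ℝ (Fin 3))) (hΩ : IsOpen Ω)
    (ω d₀ : ℂ) (hω : ω ≠ 0) (hd₀ : ‖d₀‖ = 1)
    (A : ℝ) (hA : Filter.Tendsto (afun r₁ αt) (nhdsWithin r₁ (Set.Ioi r₁)) (nhds A))
    (αh : ℝ → ℝ)
    (hαh₁ : ∀ r, 0 ≤ r → r ≤ r₁ → αh r = A)
    (hαh₂ : ∀ r, r₁ < r → αh r = afun r₁ αt r)
    (τ₁ : ℝ) (hτ₁ : τ₁ ∈ Set.Ioo (-Real.pi) 0)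
    (hargω : (-(ω ^ 2 * d₀ ^ 2)).arg ∈ Set.Icc τ₁ 0)
    (hsec1 : ∀ r, 0 ≤ r →
      ((dtil αt r) ^ 2 * (‖dtil αh r‖ : ℂ) / (dfun r₁ αt r * dtil αh r)).arg ∈
        Set.Icc τ₁ 0)
    (hsec2 : ∀ r, 0 ≤ r →
      (dfun r₁ αt r * (‖dtil αh r‖ : ℂ) / dtil αh r).arg ∈ Set.Icc τ₁ 0) :
    ∀ u : EuclideanSpace ℝ (Fin 3) → ℂ, ContDiff ℝ 1 u → HasCompactSupport u →
      tsupport u ⊆ Ω →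
      Real.cos (τ₁ / 2) * min 1 (‖ω‖ ^ 2) * XnormSq r₁ αt Ω u ≤
        (Complex.I * Complex.exp (-Complex.I * (((Real.pi + τ₁) / 2 : ℝ) : ℂ)) *
          aOne r₁ αt αh Ω ω d₀ u).re :=
  stmt11_general r₁ αt h21 Ω ω d₀ hd₀ A αh hαh₁ hαh₂ τ₁ hτ₁ hargω hsec1 hsec2
end
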